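/- arXiv:1601.02890 — 4 statements merged into one kernel-verified Lean document; each statement's English description precedes it below -/
import Mathlib

section
/- For every integer n ≥ 1, r2(n) = 4(d₁(n) − d₃(n)), where d₁(n) and d₃(n) count the divisors of n congruent to 1 and 3 modulo 4 respectively. -/
/-- The number of representations of `n` as an ordered sum of two squares of integers. -/
noncomputable def r2 (n : ℕ) : ℕ := Nat.card {p : ℤ × ℤ // p.1 ^ 2 + p.2 ^ 2 = (n : ℤ)}

/-!
Since `a² + b²` is the norm of `a + bi`, `r2 n` counts the Gaussian integers of norm `n`: four
times the number of their associate classes, the units being `±1, ±i`. Splitting an element of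
norm `mn`, `m` and `n` coprime, into factors of norms `m` and `n` shows that this number of classes
is multiplicative. Over a prime power `p ^ k`, every class of norm `p ^ k` is `π ^ i * π̄ ^ (k - i)`
for a Gaussian prime `π` above `p`, giving `1` class for `p = 2` (where `π̄ ~ π`), `k + 1` classes
for `p ≡ 1 mod 4` (where `π̄ ≁ π`) and `1` or `0` for `p ≡ 3 mod 4` (where `π = p`) as `k` is even
or odd. These are the values at `p ^ k` of the multiplicative function `∑_{d ∣ n} χ₄ d`, which is
`d₁ n - d₃ n`.
-/

theorem Associates.natCard_preimage_mk {α : Type*} [CommMonoidWithZero α] [IsCancelMulZero α]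
    {s : Set (Associates α)} (hs : 0 ∉ s) :
    Nat.card (Associates.mk ⁻¹' s) = Nat.card s * Nat.card αˣ := by
  have mk_out_mul (a : Associates α) (u : αˣ) : Associates.mk (Quot.out a * u) = a := by
    rw [Associates.mk_eq_mk_iff_associated.2 (associated_mul_unit_left _ _ u.isUnit),
      Associates.quot_out]
  have hbij : Function.Bijective fun p : s × αˣ =>
      (⟨Quot.out p.1.1 * p.2, by simp [mk_out_mul]⟩ : Associates.mk ⁻¹' s) := by
    constructor
    · rintro ⟨⟨a, ha⟩, u⟩ ⟨⟨b, hb⟩, v⟩ h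
      have h' : Quot.out a * u = Quot.out b * v := congrArg Subtype.val h
      obtain rfl : a = b := by simpa [mk_out_mul] using congrArg Associates.mk h'
      have ha0 : Quot.out a ≠ 0 := by
        rw [← Associates.mk_ne_zero, Associates.quot_out]; exact ne_of_mem_of_not_mem ha hs
      simpa [Units.ext_iff] using mul_left_cancel₀ ha0 h'
    · rintro ⟨x, hx⟩
      obtain ⟨u, hu⟩ := Associates.mk_quot_out x
      exact ⟨(⟨Associates.mk x, hx⟩, u), Subtype.ext hu⟩
  rw [← Nat.card_prod, Nat.card_congr (Equiv.ofBijective _ hbij)]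

open ArithmeticFunction in
theorem DirichletCharacter.sum_divisors_mul {R : Type*} [CommSemiring R] {N : ℕ}
    (χ : DirichletCharacter R N) {m n : ℕ} (hmn : m.Coprime n) :
    ∑ d ∈ (m * n).divisors, χ d = (∑ d ∈ m.divisors, χ d) * ∑ d ∈ n.divisors, χ d := by
  have h (k : ℕ) : ((zeta : ArithmeticFunction R) * toArithmeticFunction (χ ·)) k =
      ∑ d ∈ k.divisors, χ d := by
    rw [coe_zeta_mul_apply]
    exact Finset.sum_congr rfl fun d hd =>
      (χ.apply_eq_toArithmeticFunction_apply (Nat.ne_of_gt (Nat.pos_of_mem_divisors hd))).symm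
  rw [← h, ← h, ← h, (isMultiplicative_zeta.natCast.mul
    χ.isMultiplicative_toArithmeticFunction).map_mul_of_coprime hmn]

theorem ZMod.sum_χ₄_natCast (s : Finset ℕ) :
    ∑ d ∈ s, χ₄ d = ((s.filter (fun d => d % 4 = 1)).card : ℤ) -
      ((s.filter (fun d => d % 4 = 3)).card : ℤ) := by
  have h (d : ℕ) : χ₄ d = (if d % 4 = 1 then 1 else 0) - (if d % 4 = 3 then 1 else 0) := by
    rw [χ₄_nat_eq_if_mod_four]
    split_ifs <;> omega
  simp only [h, Finset.sum_sub_distrib, Finset.sum_boole]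

theorem Nat.Coprime.eq_of_mul_eq_of_dvd_sq {a b m n : ℕ} (hmn : m.Coprime n)
    (hm : m ≠ 0) (hn : n ≠ 0) (ha : a ∣ m ^ 2) (hb : b ∣ n ^ 2) (hab : a * b = m * n) :
    a = m ∧ b = n := by
  have ha' : a ∣ m :=
    ((hmn.pow_left 2).coprime_dvd_left ha).dvd_of_dvd_mul_right (Dvd.intro b hab)
  have hb' : b ∣ n :=
    ((hmn.symm.pow_left 2).coprime_dvd_left hb).dvd_of_dvd_mul_left (Dvd.intro_left a hab)
  have ha0 : 0 < a := Nat.pos_of_ne_zero fun h => mul_ne_zero hm hn (by rw [← hab, h, zero_mul])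
  exact (mul_eq_mul_iff_eq_and_eq_of_pos (Nat.le_of_dvd hm.bot_lt ha')
    (Nat.le_of_dvd hn.bot_lt hb') ha0 hn.bot_lt).1 hab

local notation "ℤ[i]" => GaussianInt

namespace GaussianInt

def natNorm : ℤ[i] →* ℕ := Int.natAbsHom.toMonoidHom.comp Zsqrtd.normMonoidHom

theorem natNorm_apply (z : ℤ[i]) : natNorm z = z.norm.natAbs := rfl

theorem natCast_natNorm (z : ℤ[i]) : (natNorm z : ℤ[i]) = z * star z := by
  rw [natNorm_apply, natCast_natAbs_norm, Zsqrtd.norm_eq_mul_conj]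

theorem natNorm_eq_iff {z : ℤ[i]} {n : ℕ} : natNorm z = n ↔ z.norm = n := by
  rw [← abs_natCast_norm, ← natNorm_apply, Nat.cast_inj]

theorem natNorm_eq_one_iff {z : ℤ[i]} : natNorm z = 1 ↔ IsUnit z := Zsqrtd.norm_eq_one_iff

theorem natNorm_eq_zero_iff {z : ℤ[i]} : natNorm z = 0 ↔ z = 0 := by
  rw [natNorm_apply, Int.natAbs_eq_zero, norm_eq_zero]

theorem natNorm_natCast (n : ℕ) : natNorm n = n ^ 2 := by
  simp [natNorm_apply, Zsqrtd.norm_natCast, sq, Int.natAbs_mul]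

theorem natNorm_star (z : ℤ[i]) : natNorm (star z) = natNorm z := by
  simp [natNorm_apply, Zsqrtd.norm_conj]

theorem prime_of_natNorm_prime {q : ℤ[i]} (h : (natNorm q).Prime) : Prime q := by
  refine Irreducible.prime ⟨fun hu => h.ne_one (natNorm_eq_one_iff.2 hu), fun a b hab => ?_⟩
  rw [hab, map_mul, Nat.prime_mul_iff] at h
  exact h.symm.imp (fun h => natNorm_eq_one_iff.1 h.2) (fun h => natNorm_eq_one_iff.1 h.2)

theorem prime_star {q : ℤ[i]} (hq : Prime q) : Prime (star q) :=
  (MulEquiv.prime_iff (starRingAut : RingAut ℤ[i])).2 hq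

theorem dvd_or_star_dvd_of_natNorm_dvd {q z : ℤ[i]} (hq : Prime q) (h : natNorm q ∣ natNorm z) :
    q ∣ z ∨ star q ∣ z := by
  have : q ∣ z * star z := by
    rw [← natCast_natNorm]
    exact (Dvd.intro _ (natCast_natNorm q).symm).trans (Nat.cast_dvd_cast h)
  refine (hq.dvd_or_dvd this).imp_right fun h => ?_
  simpa using map_dvd (starRingAut : RingAut ℤ[i]) h

theorem isUnit_iff_mem {u : ℤ[i]} :
    IsUnit u ↔ u ∈ ({1, -1, ⟨0, 1⟩, ⟨0, -1⟩} : Finset ℤ[i]) := by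
  rw [← Zsqrtd.norm_eq_one_iff' (by norm_num)]
  constructor
  · obtain ⟨a, b⟩ := u
    rw [Zsqrtd.norm_def]
    intro h
    have ha : -1 ≤ a ∧ a ≤ 1 := by constructor <;> nlinarith [mul_self_nonneg b]
    have hb : -1 ≤ b ∧ b ≤ 1 := by constructor <;> nlinarith [mul_self_nonneg a]
    obtain ⟨ha₁, ha₂⟩ := ha
    obtain ⟨hb₁, hb₂⟩ := hb
    interval_cases a <;> interval_cases b <;> simp_all <;> decide
  · simp only [Finset.mem_insert, Finset.mem_singleton]
    rintro (rfl | rfl | rfl | rfl) <;> rfl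

theorem natCard_units : Nat.card ℤ[i]ˣ = 4 := by
  rw [Nat.card_congr Submonoid.unitsTypeEquivIsUnitSubmonoid.toEquiv]
  have : (IsUnit.submonoid ℤ[i] : Set ℤ[i]) = ↑({1, -1, ⟨0,1⟩, ⟨0,-1⟩} : Finset ℤ[i]) := by
    ext; exact isUnit_iff_mem
  rw [← SetLike.coe_sort_coe, this, Nat.card_coe_set_eq, Set.ncard_coe_finset]
  rfl

def assocNorm : Associates ℤ[i] →* ℕ where
  toFun := Quotient.lift natNorm fun _ _ ⟨u, hu⟩ => by
    rw [← hu, map_mul, natNorm_eq_one_iff.2 u.isUnit, mul_one]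
  map_one' := rfl
  map_mul' := by rintro ⟨x⟩ ⟨y⟩; exact map_mul natNorm x y

@[simp]
theorem assocNorm_mk (z : ℤ[i]) : assocNorm (Associates.mk z) = natNorm z := rfl

theorem assocNorm_eq_one_iff {a : Associates ℤ[i]} : assocNorm a = 1 ↔ a = 1 := by
  obtain ⟨z, rfl⟩ := Associates.mk_surjective a
  rw [assocNorm_mk, natNorm_eq_one_iff, Associates.mk_eq_one]

theorem assocNorm_eq_zero_iff {a : Associates ℤ[i]} : assocNorm a = 0 ↔ a = 0 := by
  obtain ⟨z, rfl⟩ := Associates.mk_surjective a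
  rw [assocNorm_mk, natNorm_eq_zero_iff, Associates.mk_eq_zero]

theorem natCard_preimage_natNorm {n : ℕ} (hn : n ≠ 0) :
    Nat.card (natNorm ⁻¹' {n}) = 4 * Nat.card (assocNorm ⁻¹' {n}) := by
  rw [← natCard_units, mul_comm]
  exact Associates.natCard_preimage_mk (s := assocNorm ⁻¹' {n})
    fun h => hn (h.symm.trans (assocNorm_eq_zero_iff.2 rfl))

theorem exists_mul_eq_of_natNorm_eq_mul {m n : ℕ} (hm : m ≠ 0) (hn : n ≠ 0) (hmn : m.Coprime n)
    {z : ℤ[i]} (hz : natNorm z = m * n) : ∃ x y, z = x * y ∧ natNorm x = m ∧ natNorm y = n := by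
  have hdvd : z ∣ (m : ℤ[i]) * n := Dvd.intro _ (by rw [← natCast_natNorm, hz, Nat.cast_mul])
  obtain ⟨x, y, hx, hy, rfl⟩ := exists_dvd_and_dvd_of_dvd_mul hdvd
  refine ⟨x, y, rfl, hmn.eq_of_mul_eq_of_dvd_sq hm hn ?_ ?_ ?_⟩
  · simpa [natNorm_natCast] using map_dvd natNorm hx
  · simpa [natNorm_natCast] using map_dvd natNorm hy
  · rwa [← map_mul]

theorem isRelPrime_of_coprime_assocNorm {a b : Associates ℤ[i]}
    (h : (assocNorm a).Coprime (assocNorm b)) : IsRelPrime a b := fun d hda hdb => by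
  rw [Associates.isUnit_iff_eq_one, ← assocNorm_eq_one_iff]
  exact Nat.eq_one_of_dvd_coprimes h (map_dvd assocNorm hda) (map_dvd assocNorm hdb)

theorem natCard_preimage_assocNorm_mul {m n : ℕ} (hm : m ≠ 0) (hn : n ≠ 0) (hmn : m.Coprime n) :
    Nat.card (assocNorm ⁻¹' {m * n}) =
      Nat.card (assocNorm ⁻¹' {m}) * Nat.card (assocNorm ⁻¹' {n}) := by
  have hbij : Function.Bijective fun p : assocNorm ⁻¹' {m} × assocNorm ⁻¹' {n} =>
      (⟨p.1.1 * p.2.1, by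
        rw [Set.mem_preimage, map_mul, Set.eq_of_mem_singleton p.1.2,
          Set.eq_of_mem_singleton p.2.2]; rfl⟩ : assocNorm ⁻¹' {m * n}) := by
    constructor
    · rintro ⟨⟨a, ha⟩, ⟨b, hb⟩⟩ ⟨⟨a', ha'⟩, ⟨b', hb'⟩⟩ h
      simp only [Set.mem_preimage, Set.mem_singleton_iff] at ha hb ha' hb'
      have h' : a * b = a' * b' := congrArg Subtype.val h
      have hdvd {a b a' b' : Associates ℤ[i]} (ha : assocNorm a = m) (hb' : assocNorm b' = n)
          (h : a * b = a' * b') : a ∣ a' :=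
        (isRelPrime_of_coprime_assocNorm (by rwa [ha, hb'])).dvd_of_dvd_mul_right
          (h ▸ dvd_mul_right a b)
      obtain rfl : a = a' := dvd_antisymm (hdvd ha hb' h') (hdvd ha' hb h'.symm)
      have ha0 : a ≠ 0 := by rintro rfl; exact hm (ha.symm.trans (assocNorm_eq_zero_iff.2 rfl))
      obtain rfl : b = b' := mul_left_cancel₀ ha0 h'
      rfl
    · rintro ⟨a, ha⟩
      obtain ⟨z, rfl⟩ := Associates.mk_surjective a
      obtain ⟨x, y, rfl, hx, hy⟩ := exists_mul_eq_of_natNorm_eq_mul hm hn hmn ha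
      exact ⟨(⟨Associates.mk x, hx⟩, ⟨Associates.mk y, hy⟩), Subtype.ext Associates.mk_mul_mk⟩
  rw [← Nat.card_prod, Nat.card_congr (Equiv.ofBijective _ hbij)]

theorem exists_associated_pow_mul_star_pow {q z : ℤ[i]} (hq : Prime q) {k : ℕ}
    (hz : natNorm z = natNorm q ^ k) : ∃ i ≤ k, Associated (q ^ i * star q ^ (k - i)) z := by
  induction k generalizing z with
  | zero =>
    exact ⟨0, le_rfl, by simpa using (associated_one_iff_isUnit.2 (natNorm_eq_one_iff.1 hz)).symm⟩
  | succ k ih =>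
    have hq0 : natNorm q ≠ 0 := natNorm_eq_zero_iff.not.2 hq.ne_zero
    rcases dvd_or_star_dvd_of_natNorm_dvd hq (hz ▸ dvd_pow_self _ k.succ_ne_zero) with
      ⟨w, rfl⟩ | ⟨w, rfl⟩
    · rw [map_mul, pow_succ'] at hz
      obtain ⟨i, hi, h⟩ := ih (mul_left_cancel₀ hq0 hz)
      refine ⟨i + 1, by omega, ?_⟩
      rw [show k + 1 - (i + 1) = k - i by omega, pow_succ', mul_assoc]
      exact h.mul_left q
    · rw [map_mul, natNorm_star, pow_succ'] at hz
      obtain ⟨i, hi, h⟩ := ih (mul_left_cancel₀ hq0 hz)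
      refine ⟨i, by omega, ?_⟩
      rw [show k + 1 - i = k - i + 1 by omega, pow_succ', mul_left_comm]
      exact h.mul_left (star q)

theorem preimage_assocNorm_natNorm_pow {q : ℤ[i]} (hq : Prime q) (k : ℕ) :
    assocNorm ⁻¹' {natNorm q ^ k} =
      (fun i => Associates.mk (q ^ i * star q ^ (k - i))) '' Set.Iic k := by
  ext a
  constructor
  · intro ha
    obtain ⟨z, rfl⟩ := Associates.mk_surjective a
    obtain ⟨i, hi, h⟩ := exists_associated_pow_mul_star_pow hq ha
    exact ⟨i, hi, Associates.mk_eq_mk_iff_associated.2 h⟩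
  · rintro ⟨i, hi, rfl⟩
    simp [natNorm_star, ← pow_add, Nat.add_sub_cancel' (Set.mem_Iic.1 hi)]

theorem natCard_preimage_assocNorm_pow_of_star_dvd {q : ℤ[i]} (hq : Prime q) (h : star q ∣ q)
    (k : ℕ) : Nat.card (assocNorm ⁻¹' {natNorm q ^ k}) = 1 := by
  have hassoc : Associated (star q) q :=
    (prime_star hq).irreducible.associated_of_dvd hq.irreducible h
  have hconst : Set.EqOn (fun i => Associates.mk (q ^ i * star q ^ (k - i)))
      (fun _ => Associates.mk (q ^ k)) (Set.Iic k) := fun i hi => by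
    rw [Associates.mk_eq_mk_iff_associated, ← Nat.add_sub_cancel' (Set.mem_Iic.1 hi), pow_add,
      Nat.add_sub_cancel_left]
    exact (hassoc.pow_pow).mul_left _
  rw [preimage_assocNorm_natNorm_pow hq, hconst.image_eq, Set.nonempty_Iic.image_const,
    Nat.card_unique]

theorem natCard_preimage_assocNorm_pow_of_not_dvd_star {q : ℤ[i]} (hq : Prime q)
    (h : ¬q ∣ star q) (k : ℕ) : Nat.card (assocNorm ⁻¹' {natNorm q ^ k}) = k + 1 := by
  have hmult (i : ℕ) : emultiplicity q (q ^ i * star q ^ (k - i)) = i := by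
    rw [emultiplicity_mul hq, emultiplicity_pow_self_of_prime hq, emultiplicity_pow hq,
      emultiplicity_eq_zero.2 h, mul_zero, add_zero]
  have hinj : Set.InjOn (fun i => Associates.mk (q ^ i * star q ^ (k - i))) (Set.Iic k) :=
    fun i _ j _ hij => by
      have := emultiplicity_eq_of_associated_right (Associates.mk_eq_mk_iff_associated.1 hij)
        (a := q)
      rwa [hmult, hmult, Nat.cast_inj] at this
  rw [preimage_assocNorm_natNorm_pow hq, Nat.card_image_of_injOn hinj]
  simp

theorem not_dvd_star_of_natNorm_prime {q : ℤ[i]} (hp : (natNorm q).Prime) (h2 : natNorm q ≠ 2) :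
    ¬q ∣ star q := by
  rintro ⟨c, hc⟩
  have hc1 : IsUnit c := by
    rw [← natNorm_eq_one_iff]
    have := congrArg natNorm hc
    rw [natNorm_star, map_mul] at this
    exact (Nat.mul_eq_left hp.ne_zero).1 this.symm
  have hnorm : natNorm q = q.re.natAbs * q.re.natAbs + q.im.natAbs * q.im.natAbs :=
    natAbs_norm_eq q
  -- `star q = q * c` with `c ∈ {±1, ±i}` makes the norm a square or twice a square.
  rw [isUnit_iff_mem] at hc1
  simp only [Finset.mem_insert, Finset.mem_singleton] at hc1
  have hcases : q.re.natAbs = 0 ∨ q.im.natAbs = 0 ∨ q.re.natAbs = q.im.natAbs := by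
    rcases hc1 with rfl | rfl | rfl | rfl <;> simp [Zsqrtd.ext_iff] at hc <;> omega
  have hsq (n : ℕ) : ¬(n * n).Prime := fun h => by
    rcases Nat.prime_mul_iff.1 h with ⟨h1, rfl⟩ | ⟨h1, rfl⟩ <;> exact Nat.not_prime_one h1
  rcases hcases with h | h | h
  · rw [h, zero_mul, zero_add] at hnorm
    exact hsq _ (hnorm ▸ hp)
  · rw [h, zero_mul, add_zero] at hnorm
    exact hsq _ (hnorm ▸ hp)
  · rw [h, ← two_mul] at hnorm
    rcases Nat.prime_mul_iff.1 (hnorm ▸ hp) with ⟨-, h1⟩ | ⟨-, h1⟩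
    · exact h2 (by rw [hnorm, h1, mul_one])
    · omega

theorem natCard_preimage_assocNorm_two_pow (k : ℕ) : Nat.card (assocNorm ⁻¹' {2 ^ k}) = 1 :=
  natCard_preimage_assocNorm_pow_of_star_dvd (q := ⟨1, 1⟩)
    (prime_of_natNorm_prime Nat.prime_two) ⟨⟨0, 1⟩, rfl⟩ k  -- 1 + i = (1 - i) * i

theorem natCard_preimage_assocNorm_pow_of_mod_four_eq_three {p : ℕ} [Fact p.Prime]
    (hp : p % 4 = 3) (k : ℕ) : Nat.card (assocNorm ⁻¹' {p ^ k}) = if Even k then 1 else 0 := by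
  split_ifs with hk
  · obtain ⟨j, rfl⟩ := hk
    have := natCard_preimage_assocNorm_pow_of_star_dvd
      (prime_of_nat_prime_of_mod_four_eq_three p hp) (by rw [star_natCast]) j
    rwa [natNorm_natCast, ← pow_mul, two_mul] at this
  · suffices assocNorm ⁻¹' {p ^ k} = ∅ by simp [this]
    refine Set.eq_empty_of_forall_notMem fun a ha => hk ?_
    obtain ⟨z, rfl⟩ := Associates.mk_surjective a
    have hsum : ∃ x y, p ^ k = x ^ 2 + y ^ 2 :=
      ⟨z.re.natAbs, z.im.natAbs, by
        rw [← Set.eq_of_mem_singleton ha, assocNorm_mk, natNorm_apply, natAbs_norm_eq, sq, sq]⟩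
    have hk0 : k ≠ 0 := by rintro rfl; exact hk ⟨0, rfl⟩
    simpa [Nat.primeFactors_prime_pow hk0 Fact.out, hp] using Nat.eq_sq_add_sq_iff.1 hsum p

theorem natCard_preimage_assocNorm_pow_of_mod_four_eq_one {p : ℕ} [Fact p.Prime]
    (hp : p % 4 = 1) (k : ℕ) : Nat.card (assocNorm ⁻¹' {p ^ k}) = k + 1 := by
  obtain ⟨a, b, hab⟩ := Nat.Prime.sq_add_sq (p := p) (by omega)
  have hq : natNorm ⟨a, b⟩ = p := by
    rw [natNorm_eq_iff, Zsqrtd.norm_def]; push_cast [← hab]; ring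
  have hprime : (natNorm ⟨a, b⟩).Prime := hq ▸ Fact.out
  rw [← hq]
  exact natCard_preimage_assocNorm_pow_of_not_dvd_star (prime_of_natNorm_prime hprime)
    (not_dvd_star_of_natNorm_prime hprime (by omega)) k

theorem natCard_preimage_assocNorm_prime_pow {p : ℕ} (hp : p.Prime) (k : ℕ) :
    (Nat.card (assocNorm ⁻¹' {p ^ k}) : ℤ) = ∑ i ∈ Finset.range (k + 1), ZMod.χ₄ p ^ i := by
  have := Fact.mk hp
  rcases hp.eq_two_or_odd' with rfl | hodd
  · rw [natCard_preimage_assocNorm_two_pow, Finset.sum_range_succ']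
    simp
  rcases Nat.odd_mod_four_iff.1 (Nat.odd_iff.1 hodd) with hp1 | hp3
  · simp [natCard_preimage_assocNorm_pow_of_mod_four_eq_one hp1, ZMod.χ₄_nat_one_mod_four hp1]
  · rw [natCard_preimage_assocNorm_pow_of_mod_four_eq_three hp3, ZMod.χ₄_nat_three_mod_four hp3,
      neg_one_geom_sum]
    by_cases hk : Even k <;> simp [hk, Nat.even_add_one]

theorem natCard_preimage_assocNorm_eq_sum_divisors {n : ℕ} (hn : n ≠ 0) :
    (Nat.card (assocNorm ⁻¹' {n}) : ℤ) = ∑ d ∈ n.divisors, ZMod.χ₄ d := by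
  induction n using Nat.recOnPrimeCoprime with
  | zero => exact absurd rfl hn
  | prime_pow p k hp =>
    rw [natCard_preimage_assocNorm_prime_pow hp, Nat.sum_divisors_prime_pow hp]
    simp only [Nat.cast_pow, map_pow]
  | coprime a b ha hb hab iha ihb =>
    rw [natCard_preimage_assocNorm_mul (by omega) (by omega) hab, Nat.cast_mul, iha (by omega),
      ihb (by omega), DirichletCharacter.sum_divisors_mul _ hab]

end GaussianInt

theorem r2_eq_natCard_preimage_natNorm (n : ℕ) : r2 n = Nat.card (GaussianInt.natNorm ⁻¹' {n}) := by
  let e : ℤ × ℤ ≃ ℤ[i] := ⟨fun p => ⟨p.1, p.2⟩, fun z => (z.re, z.im), fun _ => rfl, fun _ => rfl⟩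
  refine Nat.card_congr (e.subtypeEquiv fun p => ?_)
  rw [Set.mem_preimage, Set.mem_singleton_iff, GaussianInt.natNorm_eq_iff, Zsqrtd.norm_def]
  simp [e, sq]

theorem r2_eq_four_mul_d1_sub_d3 (n : ℕ) (hn : 1 ≤ n) :
    (r2 n : ℤ) =
      4 * (((n.divisors.filter (fun d => d % 4 = 1)).card : ℤ) -
           ((n.divisors.filter (fun d => d % 4 = 3)).card : ℤ)) := by
  rw [r2_eq_natCard_preimage_natNorm, GaussianInt.natCard_preimage_natNorm (by omega),
    Nat.cast_mul, Nat.cast_ofNat, GaussianInt.natCard_preimage_assocNorm_eq_sum_divisors (by omega),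
    ZMod.sum_χ₄_natCast]
end

section
/- For every real x ≥ 1, the partial sums S_M = Σ_{n=1}^{M} cos(2π√(nx) + π/4)/√n are bounded uniformly in M; that is, there exists a constant C(x) such that |S_M| ≤ C(x) for all M ≥ 1. -/
/-!
Put `f t = cos (ω √t + φ) / √t` with `ω = 2π√x`, so the summand is `f n`. The trapezoidal rule on
each `[k, k + 1]` gives `∑ₙ₌₁ᴹ f n = ∫₁ᴹ f + (f 1 + f M) / 2 + ∑ₖ Eₖ` with trapezoidal errors
`|Eₖ| ≤ sup_{[k, k+1]} |f''| / 12`. The integral is bounded because `f` is the derivative of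
`(2 / ω) sin (ω √t + φ)`. A first-order comparison would fail, since `f' t ≈ ω / t` is not
integrable at infinity, but `f'' t = O(ω² t^(-3/2))`, so the errors are summable.
-/
open Real MeasureTheory intervalIntegral Finset Set
open scoped Interval

theorem abs_trapezoidal_error_one_le {f f' f'' : ℝ → ℝ} {a b ζ : ℝ}
    (hf : ∀ x ∈ [[a, b]], HasDerivAt f (f' x) x) (hf' : ∀ x ∈ [[a, b]], HasDerivAt f' (f'' x) x)
    (hζ : ∀ x ∈ [[a, b]], |f'' x| ≤ ζ) :
    |trapezoidal_error f 1 a b| ≤ |b - a| ^ 3 * ζ / 12 := by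
  rcases eq_or_ne a b with rfl | hab
  · simp [trapezoidal_error_eq]
  have hs := uniqueDiffOn_uIcc hab
  have hderiv : EqOn (derivWithin f [[a, b]]) f' [[a, b]] := fun x hx =>
    (hf x hx).hasDerivWithinAt.derivWithin (hs x hx)
  have h_ddf : DifferentiableOn ℝ (derivWithin f [[a, b]]) [[a, b]] :=
    DifferentiableOn.congr (fun x hx => (hf' x hx).differentiableAt.differentiableWithinAt) hderiv
  refine (trapezoidal_error_le (ζ := ζ)
    (fun x hx => (hf x hx).differentiableAt.differentiableWithinAt) h_ddf (fun x => ?_)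
    one_pos).trans_eq (by norm_num)
  by_cases hx : x ∈ [[a, b]]
  · rw [iteratedDerivWithin_succ, iteratedDerivWithin_one, derivWithin_congr hderiv (hderiv hx),
      (hf' x hx).hasDerivWithinAt.derivWithin (hs x hx)]
    exact hζ x hx
  · rw [iteratedDerivWithin_succ,
      derivWithin_zero_of_notMem_closure (by rwa [Set.uIcc, closure_Icc]), abs_zero]
    exact (abs_nonneg _).trans (hζ a left_mem_uIcc)

theorem sum_Icc_eq_integral_add_sum_trapezoidal_error {f : ℝ → ℝ} (hf : ContinuousOn f (Ici 1))
    {M : ℕ} (hM : 1 ≤ M) :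
    ∑ n ∈ Icc 1 M, f n = (∫ t in (1 : ℝ)..M, f t) + (f 1 + f M) / 2 +
      ∑ k ∈ Ico 1 M, trapezoidal_error f 1 k (k + 1) := by
  induction M, hM using Nat.le_induction with
  | base => simp
  | succ M hM ih =>
    have hM' : (1 : ℝ) ≤ M := by exact_mod_cast hM
    have hint : ∀ a b : ℝ, 1 ≤ a → 1 ≤ b → IntervalIntegrable f volume a b := fun a b ha hb =>
      (hf.mono fun t ht => (le_min ha hb).trans ht.1).intervalIntegrable
    have hsplit := integral_add_adjacent_intervals (hint 1 M le_rfl hM')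
      (hint M (M + 1) hM' (by linarith))
    rw [sum_Icc_succ_top (by omega), ih, sum_Ico_succ_top hM, trapezoidal_error,
      trapezoidal_integral_one, Nat.cast_succ, ← hsplit]
    ring

noncomputable def cosSqrtDivSqrt (ω φ t : ℝ) : ℝ := cos (ω * √t + φ) / √t

section
variable {ω φ t : ℝ}

theorem hasDerivAt_mul_sqrt_add (ht : 0 < t) :
    HasDerivAt (fun t => ω * √t + φ) (ω / (2 * √t)) t :=
  (((hasDerivAt_sqrt ht.ne').const_mul ω).add_const φ).congr_deriv (by ring)

theorem hasDerivAt_sin_mul_sqrt_add (hω : ω ≠ 0) (ht : 0 < t) :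
    HasDerivAt (fun t => 2 / ω * sin (ω * √t + φ)) (cosSqrtDivSqrt ω φ t) t := by
  have hs : 0 < √t := sqrt_pos.2 ht
  refine ((hasDerivAt_mul_sqrt_add ht).sin.const_mul (2 / ω)).congr_deriv ?_
  unfold cosSqrtDivSqrt
  field_simp

theorem hasDerivAt_cosSqrtDivSqrt (ht : 0 < t) :
    HasDerivAt (cosSqrtDivSqrt ω φ)
      (-(ω * √t * sin (ω * √t + φ) + cos (ω * √t + φ)) / (2 * t * √t)) t := by
  refine ((hasDerivAt_mul_sqrt_add ht).cos.div (hasDerivAt_sqrt ht.ne')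
    (sqrt_pos.2 ht).ne').congr_deriv ?_
  obtain ⟨s, hs, rfl⟩ : ∃ s, 0 < s ∧ t = s ^ 2 := ⟨√t, sqrt_pos.2 ht, (sq_sqrt ht.le).symm⟩
  rw [sqrt_sq hs.le]
  field_simp
  ring

theorem hasDerivAt_deriv_cosSqrtDivSqrt (ht : 0 < t) :
    HasDerivAt (fun t => -(ω * √t * sin (ω * √t + φ) + cos (ω * √t + φ)) / (2 * t * √t))
      (((3 - ω ^ 2 * t) * cos (ω * √t + φ) + 3 * ω * √t * sin (ω * √t + φ)) / (4 * t ^ 2 * √t))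
      t := by
  have hu := hasDerivAt_mul_sqrt_add (ω := ω) (φ := φ) ht
  have hnum := (((hasDerivAt_sqrt ht.ne').const_mul ω).mul hu.sin).add hu.cos
  have hden := ((hasDerivAt_id' t).const_mul 2).mul (hasDerivAt_sqrt ht.ne')
  refine (hnum.neg.div hden (by simp only [Pi.mul_apply]; positivity)).congr_deriv ?_
  obtain ⟨s, hs, rfl⟩ : ∃ s, 0 < s ∧ t = s ^ 2 := ⟨√t, sqrt_pos.2 ht, (sq_sqrt ht.le).symm⟩
  simp only [Pi.mul_apply, Pi.add_apply, Pi.neg_apply, sqrt_sq hs.le]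
  field_simp
  ring

theorem abs_cosSqrtDivSqrt_le_one (ht : 1 ≤ t) : |cosSqrtDivSqrt ω φ t| ≤ 1 := by
  rw [cosSqrtDivSqrt, abs_div, abs_of_pos (sqrt_pos.2 (by linarith))]
  exact div_le_one_of_le₀ ((abs_cos_le_one _).trans (one_le_sqrt.2 ht)) (sqrt_nonneg t)

theorem abs_second_deriv_cosSqrtDivSqrt_le (ht : 1 ≤ t) :
    |((3 - ω ^ 2 * t) * cos (ω * √t + φ) + 3 * ω * √t * sin (ω * √t + φ)) / (4 * t ^ 2 * √t)|
      ≤ (ω ^ 2 + 3 * |ω| + 3) / 4 / (t * √t) := by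
  have ht0 : 0 < t := by linarith
  have hst : √t ≤ t := sqrt_le_self_iff.2 (Or.inr ht)
  have hs : 0 < √t := sqrt_pos.2 ht0
  set u := ω * √t + φ
  have hnum : |(3 - ω ^ 2 * t) * cos u + 3 * ω * √t * sin u| ≤ (ω ^ 2 + 3 * |ω| + 3) * t := by
    have h3 : |3 - ω ^ 2 * t| ≤ 3 + ω ^ 2 * t := abs_sub_le_iff.2 ⟨by nlinarith, by nlinarith⟩
    calc |(3 - ω ^ 2 * t) * cos u + 3 * ω * √t * sin u|
        ≤ |3 - ω ^ 2 * t| * |cos u| + 3 * |ω| * √t * |sin u| := by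
          refine (abs_add_le _ _).trans_eq ?_
          rw [abs_mul, abs_mul, abs_mul, abs_mul, abs_of_pos hs,
            abs_of_pos (by norm_num : (0 : ℝ) < 3)]
      _ ≤ (3 + ω ^ 2 * t) * 1 + 3 * |ω| * t * 1 := by
          gcongr
          exacts [abs_cos_le_one u, abs_sin_le_one u]
      _ ≤ (ω ^ 2 + 3 * |ω| + 3) * t := by nlinarith
  rw [abs_div, abs_of_pos (by positivity : 0 < 4 * t ^ 2 * √t),
    div_le_div_iff₀ (by positivity) (by positivity)]
  calc |(3 - ω ^ 2 * t) * cos u + 3 * ω * √t * sin u| * (t * √t)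
      ≤ (ω ^ 2 + 3 * |ω| + 3) * t * (t * √t) := by gcongr
    _ = (ω ^ 2 + 3 * |ω| + 3) / 4 * (4 * t ^ 2 * √t) := by ring

theorem abs_trapezoidal_error_cosSqrtDivSqrt_le {k : ℝ} (hk : 1 ≤ k) :
    |trapezoidal_error (cosSqrtDivSqrt ω φ) 1 k (k + 1)|
      ≤ (ω ^ 2 + 3 * |ω| + 3) / 48 / (k * √k) := by
  have hkx : ∀ x ∈ [[k, k + 1]], k ≤ x := fun x hx => by
    rw [Set.uIcc_of_le (by linarith)] at hx
    exact hx.1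
  refine (abs_trapezoidal_error_one_le
    (fun x hx => hasDerivAt_cosSqrtDivSqrt (by linarith [hkx x hx]))
    (fun x hx => hasDerivAt_deriv_cosSqrtDivSqrt (by linarith [hkx x hx]))
    (ζ := (ω ^ 2 + 3 * |ω| + 3) / 4 / (k * √k)) fun x hx => ?_).trans_eq ?_
  · refine (abs_second_deriv_cosSqrtDivSqrt_le (hk.trans (hkx x hx))).trans ?_
    have hk0 : 0 < k := by linarith
    have hkx' := hkx x hx
    have hx0 : 0 ≤ x := hk0.le.trans hkx'
    gcongr
  · norm_num
    ring

end

theorem continuousOn_cosSqrtDivSqrt (ω φ : ℝ) : ContinuousOn (cosSqrtDivSqrt ω φ) (Ioi 0) :=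
  fun _ ht => (hasDerivAt_cosSqrtDivSqrt ht).continuousAt.continuousWithinAt

theorem abs_integral_cosSqrtDivSqrt_le {ω φ a b : ℝ} (hω : ω ≠ 0) (ha : 0 < a) (hb : 0 < b) :
    |∫ t in a..b, cosSqrtDivSqrt ω φ t| ≤ 4 / |ω| := by
  have hpos : ∀ t ∈ [[a, b]], 0 < t := fun t ht => (lt_min ha hb).trans_le ht.1
  rw [integral_eq_sub_of_hasDerivAt (fun t ht => hasDerivAt_sin_mul_sqrt_add hω (hpos t ht))
    ((continuousOn_cosSqrtDivSqrt ω φ).mono hpos).intervalIntegrable]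
  have hsin : ∀ t, |2 / ω * sin (ω * √t + φ)| ≤ 2 / |ω| := fun t => by
    rw [abs_mul, abs_div, abs_two]
    exact mul_le_of_le_one_right (by positivity) (abs_sin_le_one _)
  have := abs_sub (2 / ω * sin (ω * √b + φ)) (2 / ω * sin (ω * √a + φ))
  linarith [hsin a, hsin b, show 4 / |ω| = 2 / |ω| + 2 / |ω| by ring]

theorem summable_one_div_mul_sqrt : Summable fun k : ℕ => 1 / (k * √k) := by
  convert summable_one_div_nat_rpow.2 (by norm_num : (1 : ℝ) < 3 / 2) using 2 with k
  rw [sqrt_eq_rpow, ← rpow_one_add' (Nat.cast_nonneg k) (by norm_num)]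
  norm_num

theorem abs_sum_cosSqrtDivSqrt_le {ω : ℝ} (φ : ℝ) (hω : ω ≠ 0) {M : ℕ} (hM : 1 ≤ M) :
    |∑ n ∈ Icc 1 M, cosSqrtDivSqrt ω φ n|
      ≤ 4 / |ω| + 1 + (ω ^ 2 + 3 * |ω| + 3) / 48 * ∑' k : ℕ, 1 / (k * √k) := by
  have hM' : (1 : ℝ) ≤ M := by exact_mod_cast hM
  rw [sum_Icc_eq_integral_add_sum_trapezoidal_error
    ((continuousOn_cosSqrtDivSqrt ω φ).mono fun _ ht => one_pos.trans_le (mem_Ici.1 ht)) hM]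
  have hint := abs_integral_cosSqrtDivSqrt_le (φ := φ) hω one_pos (one_pos.trans_le hM')
  have hends : |(cosSqrtDivSqrt ω φ 1 + cosSqrtDivSqrt ω φ M) / 2| ≤ 1 := by
    rw [abs_div, abs_two, div_le_one two_pos]
    linarith [abs_add_le (cosSqrtDivSqrt ω φ 1) (cosSqrtDivSqrt ω φ M),
      abs_cosSqrtDivSqrt_le_one (ω := ω) (φ := φ) le_rfl,
      abs_cosSqrtDivSqrt_le_one (ω := ω) (φ := φ) hM']
  have herr : |∑ k ∈ Ico 1 M, trapezoidal_error (cosSqrtDivSqrt ω φ) 1 k (k + 1)|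
      ≤ (ω ^ 2 + 3 * |ω| + 3) / 48 * ∑' k : ℕ, 1 / (k * √k) :=
    calc _ ≤ ∑ k ∈ Ico 1 M, (ω ^ 2 + 3 * |ω| + 3) / 48 * (1 / (k * √k)) := by
          refine (abs_sum_le_sum_abs _ _).trans (sum_le_sum fun k hk => ?_)
          rw [mul_one_div]
          exact abs_trapezoidal_error_cosSqrtDivSqrt_le (by exact_mod_cast (mem_Ico.1 hk).1)
      _ ≤ _ := by
          rw [← mul_sum]
          gcongr
          exact summable_one_div_mul_sqrt.sum_le_tsum _ fun k _ => by positivity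
  exact (abs_add_le _ _).trans (add_le_add ((abs_add_le _ _).trans (add_le_add hint hends)) herr)

theorem partial_sums_bounded (x : ℝ) (hx : 1 ≤ x) :
    ∃ C : ℝ, ∀ M : ℕ, 1 ≤ M →
      |∑ n ∈ Finset.Icc 1 M, cos (2 * π * Real.sqrt (n * x) + π / 4) / Real.sqrt n| ≤ C := by
  have hω : 2 * π * √x ≠ 0 := (mul_pos two_pi_pos (sqrt_pos.2 (by linarith))).ne'
  refine ⟨_, fun M hM => (abs_sum_cosSqrtDivSqrt_le (π / 4) hω hM).trans_eq' ?_⟩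
  congr 1
  refine sum_congr rfl fun n _ => ?_
  rw [cosSqrtDivSqrt, sqrt_mul' _ (by linarith : (0 : ℝ) ≤ x), mul_comm (√(n : ℝ)) √x, mul_assoc]
end

section
/- For every ε > 0 and every real x ≥ 1, the series Σ_{n=1}^{∞} cos(2π√(nx) + π/4)/n^{(1+ε)/2} converges. -/
/-!
With `φ(t) = 2c√t + θ`, the function `H(t) = sin φ(t) · t^(1/2 - s) / c` satisfies
`H'(t) = cos φ(t) · t^(-s) + O(t^(-s - 1/2))`. By the mean value theorem each term
`cos φ(n) · n^(-s)` differs from `H(n + 1) - H(n)` by `O(n^(-s - 1/2))`, which is summable for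
`s > 1/2`; the telescoping part converges because `H(t) → 0`. For the theorem, `c = π√x`.
-/

open Real Set Filter Topology

theorem exists_tendsto_sum_range_of_summable_sub {f H : ℕ → ℝ} {l : ℝ}
    (hsum : Summable fun n => f n - (H (n + 1) - H n)) (hH : Tendsto H atTop (𝓝 l)) :
    ∃ L, Tendsto (fun M => ∑ n ∈ Finset.range M, f n) atTop (𝓝 L) := by
  refine ⟨∑' n, (f n - (H (n + 1) - H n)) + (l - H 0), ?_⟩
  refine (hsum.hasSum.tendsto_sum_nat.add (hH.sub_const (H 0))).congr fun M => ?_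
  rw [Finset.sum_sub_distrib, Finset.sum_range_sub]
  ring

theorem abs_sub_sub_le_of_hasDerivAt_add {H g g' r : ℝ → ℝ} {a C D : ℝ}
    (hH : ∀ t ∈ Icc a (a + 1), HasDerivAt H (g t + r t) t)
    (hg : ∀ t ∈ Icc a (a + 1), HasDerivAt g (g' t) t)
    (hg' : ∀ t ∈ Icc a (a + 1), |g' t| ≤ C) (hr : ∀ t ∈ Icc a (a + 1), |r t| ≤ D) :
    |H (a + 1) - H a - g a| ≤ C + D := by
  have ha : a ∈ Icc a (a + 1) := left_mem_Icc.2 (by linarith)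
  have hg_near : ∀ t ∈ Icc a (a + 1), |g t - g a| ≤ C := fun t ht => by
    have := (convex_Icc a (a + 1)).norm_image_sub_le_of_norm_hasDerivWithin_le
      (fun u hu => (hg u hu).hasDerivWithinAt) hg' ha ht
    have hC : 0 ≤ C := (abs_nonneg _).trans (hg' a ha)
    calc |g t - g a| ≤ C * |t - a| := this
      _ ≤ C * 1 := by gcongr; rw [abs_le]; constructor <;> linarith [ht.1, ht.2]
      _ = C := mul_one C
  have := (convex_Icc a (a + 1)).norm_image_sub_le_of_norm_hasDerivWithin_le
    (f := fun t => H t - g a * t) (f' := fun t => g t + r t - g a) (C := C + D)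
    (fun t ht => ((hH t ht).sub ((hasDerivAt_id t).const_mul (g a))).hasDerivWithinAt.congr_deriv
      (by simp)) (fun t ht => ?_) ha (right_mem_Icc.2 (by linarith))
  · rw [add_sub_cancel_left, norm_one, mul_one, Real.norm_eq_abs] at this
    convert this using 2
    ring
  · rw [Real.norm_eq_abs, add_sub_right_comm]
    exact (abs_add_le _ _).trans (add_le_add (hg_near t ht) (hr t ht))

section SqrtPhase

variable (c θ s : ℝ)

theorem hasDerivAt_sqrt_phase {t : ℝ} (ht : 0 < t) :
    HasDerivAt (fun u => 2 * c * √u + θ) (c / √t) t := by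
  refine (((hasDerivAt_sqrt ht.ne').const_mul (2 * c)).add_const θ).congr_deriv ?_
  field_simp

theorem hasDerivAt_cos_sqrt_phase_mul_rpow {t : ℝ} (ht : 0 < t) :
    HasDerivAt (fun u => cos (2 * c * √u + θ) * u ^ (-s))
      (-c * sin (2 * c * √t + θ) * t ^ (-s - 1 / 2) - s * cos (2 * c * √t + θ) * t ^ (-s - 1))
      t := by
  refine (((hasDerivAt_sqrt_phase c θ ht).cos).mul
    (hasDerivAt_rpow_const (p := -s) (.inl ht.ne'))).congr_deriv ?_
  rw [rpow_sub ht (-s) (1 / 2), sqrt_eq_rpow]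
  ring

theorem hasDerivAt_sin_sqrt_phase_mul_rpow_div {t : ℝ} (hc : c ≠ 0) (ht : 0 < t) :
    HasDerivAt (fun u => sin (2 * c * √u + θ) * u ^ (1 / 2 - s) / c)
      (cos (2 * c * √t + θ) * t ^ (-s)
        + (1 / 2 - s) / c * sin (2 * c * √t + θ) * t ^ (-s - 1 / 2)) t := by
  refine ((((hasDerivAt_sqrt_phase c θ ht).sin).mul
    (hasDerivAt_rpow_const (p := 1 / 2 - s) (.inl ht.ne'))).div_const c).congr_deriv ?_
  have hsqrt : √t = t ^ (1 / 2 : ℝ) := sqrt_eq_rpow t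
  rw [show (1 / 2 - s - 1 : ℝ) = -s - 1 / 2 by ring, show (1 / 2 - s : ℝ) = 1 / 2 + -s by ring,
    rpow_add ht, ← hsqrt]
  field_simp

theorem tendsto_sin_sqrt_phase_mul_rpow_div (hs : 1 / 2 < s) :
    Tendsto (fun t => sin (2 * c * √t + θ) * t ^ (1 / 2 - s) / c) atTop (𝓝 0) := by
  have hdecay : Tendsto (fun t : ℝ => t ^ (1 / 2 - s) / |c|) atTop (𝓝 0) := by
    simpa [neg_sub] using (tendsto_rpow_neg_atTop (y := s - 1 / 2) (by linarith)).div_const |c|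
  refine squeeze_zero_norm' ?_ hdecay
  filter_upwards [eventually_ge_atTop 0] with t ht
  rw [norm_div, norm_mul, Real.norm_eq_abs, Real.norm_eq_abs, Real.norm_eq_abs,
    abs_of_nonneg (rpow_nonneg ht _)]
  gcongr
  exact mul_le_of_le_one_left (rpow_nonneg ht _) (abs_sin_le_one _)

theorem abs_deriv_cos_sqrt_phase_mul_rpow_le (hs : -(1 / 2) ≤ s) {a t : ℝ} (ha : 1 ≤ a)
    (hat : a ≤ t) :
    |-c * sin (2 * c * √t + θ) * t ^ (-s - 1 / 2) - s * cos (2 * c * √t + θ) * t ^ (-s - 1)|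
      ≤ (|c| + |s|) * a ^ (-s - 1 / 2) := by
  have ht : 0 < t := by linarith
  have hdecay : t ^ (-s - 1 / 2) ≤ a ^ (-s - 1 / 2) :=
    rpow_le_rpow_of_nonpos (by linarith) hat (by linarith)
  have hfaster : t ^ (-s - 1) ≤ t ^ (-s - 1 / 2) :=
    rpow_le_rpow_of_exponent_le (by linarith) (by linarith)
  have hsin := abs_sin_le_one (2 * c * √t + θ)
  have hcos := abs_cos_le_one (2 * c * √t + θ)
  calc _ ≤ |c| * |sin (2 * c * √t + θ)| * t ^ (-s - 1 / 2)
        + |s| * |cos (2 * c * √t + θ)| * t ^ (-s - 1) := by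
        refine (abs_sub _ _).trans_eq ?_
        simp only [abs_mul, abs_neg, abs_of_pos (rpow_pos_of_pos ht _)]
    _ ≤ |c| * 1 * t ^ (-s - 1 / 2) + |s| * 1 * t ^ (-s - 1 / 2) := by gcongr
    _ ≤ (|c| + |s|) * a ^ (-s - 1 / 2) := by rw [← add_mul, mul_one, mul_one]; gcongr

theorem abs_sin_sqrt_phase_mul_rpow_le (hs : -(1 / 2) ≤ s) {a t : ℝ} (ha : 0 < a)
    (hat : a ≤ t) :
    |(1 / 2 - s) / c * sin (2 * c * √t + θ) * t ^ (-s - 1 / 2)|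
      ≤ |1 / 2 - s| / |c| * a ^ (-s - 1 / 2) := by
  have ht : 0 < t := ha.trans_le hat
  rw [abs_mul, abs_mul, abs_div, abs_of_pos (rpow_pos_of_pos ht _)]
  calc _ ≤ |1 / 2 - s| / |c| * 1 * t ^ (-s - 1 / 2) := by gcongr; exact abs_sin_le_one _
    _ ≤ |1 / 2 - s| / |c| * a ^ (-s - 1 / 2) := by
        rw [mul_one]
        exact mul_le_mul_of_nonneg_left (rpow_le_rpow_of_nonpos ha hat (by linarith))
          (by positivity)

theorem abs_increment_sub_cos_sqrt_phase_mul_rpow_le (hc : c ≠ 0) (hs : -(1 / 2) ≤ s) {a : ℝ}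
    (ha : 1 ≤ a) :
    |sin (2 * c * √(a + 1) + θ) * (a + 1) ^ (1 / 2 - s) / c
        - sin (2 * c * √a + θ) * a ^ (1 / 2 - s) / c - cos (2 * c * √a + θ) * a ^ (-s)|
      ≤ (|c| + |s| + |1 / 2 - s| / |c|) * a ^ (-s - 1 / 2) := by
  rw [add_mul]
  exact abs_sub_sub_le_of_hasDerivAt_add
    (fun t ht => hasDerivAt_sin_sqrt_phase_mul_rpow_div c θ s hc (by linarith [ht.1]))
    (fun t ht => hasDerivAt_cos_sqrt_phase_mul_rpow c θ s (by linarith [ht.1]))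
    (fun t ht => abs_deriv_cos_sqrt_phase_mul_rpow_le c θ s hs ha ht.1)
    (fun t ht => abs_sin_sqrt_phase_mul_rpow_le c θ s hs (by linarith) ht.1)

theorem exists_tendsto_sum_cos_sqrt_phase_div_rpow (hc : c ≠ 0) (hs : 1 / 2 < s) :
    ∃ L, Tendsto
      (fun M : ℕ => ∑ n ∈ Finset.Icc 1 M, cos (2 * c * √n + θ) / (n : ℝ) ^ s) atTop (𝓝 L) := by
  set H : ℝ → ℝ := fun t => sin (2 * c * √t + θ) * t ^ (1 / 2 - s) / c
  set g : ℝ → ℝ := fun t => cos (2 * c * √t + θ) * t ^ (-s)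
  have hshift : Tendsto (fun n : ℕ => (n : ℝ) + 1) atTop atTop :=
    tendsto_atTop_add_const_right _ 1 tendsto_natCast_atTop_atTop
  have hmajorant : Summable fun n : ℕ =>
      (|c| + |s| + |1 / 2 - s| / |c|) * ((n : ℝ) + 1) ^ (-s - 1 / 2) := by
    refine Summable.mul_left _ ?_
    exact_mod_cast (summable_nat_add_iff 1).2 (Real.summable_nat_rpow.2 (by linarith))
  have herror : Summable fun n : ℕ => g (n + 1) - (H (n + 1 + 1) - H (n + 1)) := by
    refine hmajorant.of_norm_bounded fun n => ?_
    rw [Real.norm_eq_abs, abs_sub_comm]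
    exact abs_increment_sub_cos_sqrt_phase_mul_rpow_le c θ s hc (by linarith) (by simp)
  obtain ⟨L, hL⟩ := exists_tendsto_sum_range_of_summable_sub (f := fun n : ℕ => g (n + 1))
    (H := fun n : ℕ => H (n + 1)) (by exact_mod_cast herror)
    ((tendsto_sin_sqrt_phase_mul_rpow_div c θ s hs).comp hshift)
  refine ⟨L, hL.congr fun M => ?_⟩
  rw [← Finset.Ico_add_one_right_eq_Icc, Finset.sum_Ico_eq_sum_range, Nat.add_sub_cancel]
  refine Finset.sum_congr rfl fun n _ => ?_
  rw [Nat.cast_add, Nat.cast_one, add_comm 1, div_eq_mul_inv, ← rpow_neg (by positivity)]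

end SqrtPhase

theorem series_converges_eps (ε : ℝ) (hε : 0 < ε) (x : ℝ) (hx : 1 ≤ x) :
    ∃ L : ℝ, Filter.Tendsto
      (fun M : ℕ => ∑ n ∈ Finset.Icc 1 M,
        cos (2 * π * Real.sqrt (n * x) + π / 4) / (n : ℝ) ^ ((1 + ε) / 2))
      Filter.atTop (nhds L) := by
  have hphase (n : ℕ) : 2 * π * √(n * x) = 2 * (π * √x) * √n := by
    rw [sqrt_mul (Nat.cast_nonneg n)]
    ring
  simp_rw [hphase]
  exact exists_tendsto_sum_cos_sqrt_phase_div_rpow _ _ _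
    (mul_pos pi_pos (sqrt_pos.2 (by linarith))).ne' (by linarith)
end

section
/- For every 0 < δ < 1/4 and every x > 0, the series Σ_{n=1}^{∞} cos(2π√(nx) + π/4)/n^{3/4−δ} converges. -/
/-!
With `F(t) = (2/c) sin(c√t + φ) t^(1/2 - s)` one has
`F'(t) = cos(c√t + φ) t^(-s) + O(t^(-s-1/2))`, and the summand `cos(c√t + φ) t^(-s)` itself
varies by `O(n^(-s-1/2))` on `[n, n + 1]`. By the mean value theorem each term of the series
therefore differs from `F(n + 1) - F(n)` by `O(n^(-s-1/2))`, which is summable for `s > 1/2`.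
The partial sums are thus a telescoping sum, convergent since `F(t) → 0`, plus the partial sums
of an absolutely convergent series. The theorem is the case `c = 2π√x`, `φ = π/4`,
`s = 3/4 - δ`.
-/

open Real Filter Topology Finset

section MeanValue

variable {E : Type*} [NormedAddCommGroup E] [NormedSpace ℝ E]

theorem norm_sub_sub_smul_le_of_hasDerivAt {F G : ℝ → E} {a b C : ℝ} {y : E} (hab : a ≤ b)
    (hF : ∀ t ∈ Set.Icc a b, HasDerivAt F (G t) t)
    (hG : ∀ t ∈ Set.Icc a b, ‖G t - y‖ ≤ C) :
    ‖F b - F a - (b - a) • y‖ ≤ C * (b - a) := by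
  have hFy : ∀ t ∈ Set.Icc a b,
      HasDerivWithinAt (fun u ↦ F u - u • y) (G t - y) (Set.Icc a b) t := fun t ht ↦
    ((hF t ht).sub ((hasDerivAt_id t).smul_const y)).hasDerivWithinAt.congr_deriv (by simp)
  have := norm_image_sub_le_of_norm_deriv_le_segment' hFy
    (fun t ht ↦ hG t (Set.Ico_subset_Icc_self ht)) b (Set.right_mem_Icc.2 hab)
  rwa [sub_sub_sub_comm, ← sub_smul] at this

theorem sum_Icc_one_eq_sum_range_sub {M : Type*} [AddCommGroup M] (a : ℕ → M) (N : ℕ) :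
    ∑ n ∈ Icc 1 N, a n = ∑ n ∈ range (N + 1), a n - a 0 := by
  rw [Nat.range_succ_eq_Icc_zero, ← insert_Icc_add_one_left_eq_Icc (Nat.zero_le N),
    sum_insert (by simp), add_sub_cancel_left, zero_add]

theorem exists_tendsto_sum_Icc_of_hasDerivAt [CompleteSpace E] {f F G : ℝ → E} {g : ℕ → ℝ}
    {L : E} (hF : ∀ t, 1 ≤ t → HasDerivAt F (G t) t)
    (hG : ∀ n : ℕ, 1 ≤ n → ∀ t ∈ Set.Icc (n : ℝ) (n + 1), ‖G t - f n‖ ≤ g n)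
    (hg : Summable g) (hFL : Tendsto F atTop (𝓝 L)) :
    ∃ l, Tendsto (fun M : ℕ ↦ ∑ n ∈ Icc 1 M, f n) atTop (𝓝 l) := by
  set e : ℕ → E := fun n ↦ F (n + 1) - F n - f n with he
  have heg : ∀ n : ℕ, 1 ≤ n → ‖e n‖ ≤ g n := fun n hn ↦ by
    have hn' : (1 : ℝ) ≤ n := by exact_mod_cast hn
    simpa using norm_sub_sub_smul_le_of_hasDerivAt (by linarith)
      (fun t ht ↦ hF t (hn'.trans ht.1)) (hG n hn)
  have hesum : Summable e := hg.of_norm_bounded_eventually_nat (eventually_atTop.2 ⟨1, heg⟩)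
  have hsum : ∀ M : ℕ, ∑ n ∈ Icc 1 M, f n
      = F (M + 1) - F 0 - f 0 - ∑ n ∈ range (M + 1), e n := fun M ↦ by
    have htel := sum_range_sub (fun n : ℕ ↦ F n) (M + 1)
    push_cast at htel
    rw [sum_Icc_one_eq_sum_range_sub, Nat.cast_zero, he, sum_sub_distrib (g := fun n : ℕ ↦ f n),
      htel]
    abel
  refine ⟨L - F 0 - f 0 - ∑' n, e n, ?_⟩
  simp_rw [hsum]
  have hFM : Tendsto (fun M : ℕ ↦ F (M + 1)) atTop (𝓝 L) :=
    hFL.comp (tendsto_atTop_add_const_right _ 1 tendsto_natCast_atTop_atTop)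
  have heM : Tendsto (fun M : ℕ ↦ ∑ n ∈ range (M + 1), e n) atTop (𝓝 (∑' n, e n)) :=
    hesum.hasSum.tendsto_sum_nat.comp (tendsto_add_atTop_nat 1)
  exact ((hFM.sub_const _).sub_const _).sub heM

end MeanValue

theorem rpow_sub_half_eq_div_sqrt {t : ℝ} (ht : 0 < t) (p : ℝ) :
    t ^ (p - 1 / 2) = t ^ p / √t := by
  rw [rpow_sub ht, sqrt_eq_rpow]

noncomputable def oscTerm (c φ s t : ℝ) : ℝ := cos (c * √t + φ) * t ^ (-s)

noncomputable def oscPrimitive (c φ s t : ℝ) : ℝ :=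
  2 / c * sin (c * √t + φ) * t ^ (1 / 2 - s)

section Oscillating

variable {c φ s t : ℝ}

theorem hasDerivAt_oscTerm (ht : 0 < t) :
    HasDerivAt (oscTerm c φ s)
      (-(c / 2) * sin (c * √t + φ) * t ^ (-s - 1 / 2) - s * cos (c * √t + φ) * t ^ (-s - 1))
      t := by
  refine ((((hasDerivAt_sqrt ht.ne').const_mul c).add_const φ).cos.mul
    (hasDerivAt_rpow_const (Or.inl ht.ne'))).congr_deriv ?_
  rw [rpow_sub_half_eq_div_sqrt ht]
  field_simp
  ring

theorem abs_oscTerm_sub_oscTerm_le (hs : -1 / 2 ≤ s) {a b : ℝ} (ha : 1 ≤ a) (hab : a ≤ b)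
    (hb : b ≤ a + 1) :
    |oscTerm c φ s b - oscTerm c φ s a| ≤ (|c| / 2 + |s|) * a ^ (-s - 1 / 2) := by
  have hC : 0 ≤ (|c| / 2 + |s|) * a ^ (-s - 1 / 2) := by positivity
  have hderiv : ∀ u ∈ Set.Icc a b, |-(c / 2) * sin (c * √u + φ) * u ^ (-s - 1 / 2)
      - s * cos (c * √u + φ) * u ^ (-s - 1)| ≤ (|c| / 2 + |s|) * a ^ (-s - 1 / 2) := by
    rintro u ⟨hau, -⟩
    have hu : 1 ≤ u := ha.trans hau
    have hpow : u ^ (-s - 1) ≤ u ^ (-s - 1 / 2) := rpow_le_rpow_of_exponent_le hu (by linarith)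
    have hmono : u ^ (-s - 1 / 2) ≤ a ^ (-s - 1 / 2) :=
      rpow_le_rpow_of_nonpos (by linarith) hau (by linarith)
    calc _ ≤ |c| / 2 * |sin (c * √u + φ)| * u ^ (-s - 1 / 2)
          + |s| * |cos (c * √u + φ)| * u ^ (-s - 1) := by
          refine (abs_sub _ _).trans_eq ?_
          simp only [abs_mul, abs_neg, abs_div, abs_two,
            abs_of_nonneg (rpow_nonneg (by linarith : (0 : ℝ) ≤ u) _)]
      _ ≤ |c| / 2 * 1 * u ^ (-s - 1 / 2) + |s| * 1 * u ^ (-s - 1 / 2) := by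
          gcongr
          exacts [abs_sin_le_one _, abs_cos_le_one _]
      _ ≤ (|c| / 2 + |s|) * a ^ (-s - 1 / 2) := by
          rw [← add_mul, mul_one, mul_one]; gcongr
  have := norm_sub_sub_smul_le_of_hasDerivAt (y := 0) (C := (|c| / 2 + |s|) * a ^ (-s - 1 / 2)) hab
    (fun u hu ↦ hasDerivAt_oscTerm (by linarith [hu.1])) (fun u hu ↦ by simpa using hderiv u hu)
  rw [smul_zero, sub_zero, Real.norm_eq_abs] at this
  exact this.trans (mul_le_of_le_one_right hC (by linarith))

theorem hasDerivAt_oscPrimitive (hc : c ≠ 0) (ht : 0 < t) :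
    HasDerivAt (oscPrimitive c φ s)
      (oscTerm c φ s t + (1 - 2 * s) / c * sin (c * √t + φ) * t ^ (-s - 1 / 2)) t := by
  have h := (((((hasDerivAt_sqrt ht.ne').const_mul c).add_const φ).sin).const_mul (2 / c)).mul
    (hasDerivAt_rpow_const (p := 1 / 2 - s) (Or.inl ht.ne'))
  refine h.congr_deriv ?_
  rw [oscTerm, show 1 / 2 - s - 1 = -s - 1 / 2 by ring, rpow_sub_half_eq_div_sqrt ht,
    show 1 / 2 - s = -s + 1 / 2 by ring, rpow_add ht, ← sqrt_eq_rpow]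
  field_simp
  ring

theorem abs_oscPrimitive_deriv_sub_oscTerm_le (hs : -1 / 2 ≤ s) {n : ℝ} (hn : 1 ≤ n)
    (ht : t ∈ Set.Icc n (n + 1)) :
    |oscTerm c φ s t + (1 - 2 * s) / c * sin (c * √t + φ) * t ^ (-s - 1 / 2) - oscTerm c φ s n|
      ≤ (|c| / 2 + |s| + |(1 - 2 * s) / c|) * n ^ (-s - 1 / 2) := by
  have hmono : t ^ (-s - 1 / 2) ≤ n ^ (-s - 1 / 2) :=
    rpow_le_rpow_of_nonpos (by linarith) ht.1 (by linarith)
  have hrest : |(1 - 2 * s) / c * sin (c * √t + φ) * t ^ (-s - 1 / 2)|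
      ≤ |(1 - 2 * s) / c| * n ^ (-s - 1 / 2) := by
    have ht0 : 0 ≤ t ^ (-s - 1 / 2) := rpow_nonneg (by linarith [ht.1]) _
    rw [abs_mul, abs_mul, abs_of_nonneg ht0]
    calc _ ≤ |(1 - 2 * s) / c| * t ^ (-s - 1 / 2) := by
          gcongr
          exact mul_le_of_le_one_right (abs_nonneg _) (abs_sin_le_one _)
      _ ≤ _ := by gcongr
  calc _ = |(oscTerm c φ s t - oscTerm c φ s n)
        + (1 - 2 * s) / c * sin (c * √t + φ) * t ^ (-s - 1 / 2)| := by ring_nf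
    _ ≤ (|c| / 2 + |s|) * n ^ (-s - 1 / 2) + |(1 - 2 * s) / c| * n ^ (-s - 1 / 2) :=
      (abs_add_le _ _).trans (add_le_add (abs_oscTerm_sub_oscTerm_le hs hn ht.1 ht.2) hrest)
    _ = _ := by ring

theorem tendsto_oscPrimitive_atTop (hs : 1 / 2 < s) :
    Tendsto (oscPrimitive c φ s) atTop (𝓝 0) := by
  have hpow : Tendsto (fun t : ℝ ↦ t ^ (1 / 2 - s)) atTop (𝓝 0) := by
    simpa using tendsto_rpow_neg_atTop (sub_pos.2 hs)
  refine squeeze_zero_norm' (a := fun t ↦ |2 / c| * t ^ (1 / 2 - s)) ?_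
    (by simpa using hpow.const_mul |2 / c|)
  filter_upwards [eventually_ge_atTop 0] with t ht
  rw [oscPrimitive, norm_mul, norm_mul, Real.norm_of_nonneg (rpow_nonneg ht _)]
  gcongr
  exact (mul_le_of_le_one_right (norm_nonneg _) (abs_sin_le_one _))

theorem exists_tendsto_sum_oscTerm (hc : c ≠ 0) (hs : 1 / 2 < s) :
    ∃ L, Tendsto (fun M : ℕ ↦ ∑ n ∈ Icc 1 M, oscTerm c φ s n) atTop (𝓝 L) :=
  exists_tendsto_sum_Icc_of_hasDerivAt (fun _ ht ↦ hasDerivAt_oscPrimitive hc (by linarith))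
    (fun _ hn _ ht ↦
      abs_oscPrimitive_deriv_sub_oscTerm_le (by linarith) (by exact_mod_cast hn) ht)
    ((summable_nat_rpow.2 (by linarith)).mul_left _) (tendsto_oscPrimitive_atTop hs)

end Oscillating

theorem series_converges_delta_general (δ x : ℝ) (hδ' : δ < 1 / 4) (hx : 0 < x) :
    ∃ L : ℝ, Filter.Tendsto
      (fun M : ℕ => ∑ n ∈ Finset.Icc 1 M,
        cos (2 * π * Real.sqrt (n * x) + π / 4) / (n : ℝ) ^ ((3 : ℝ) / 4 - δ))
      Filter.atTop (nhds L) := by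
  have hc : 2 * π * √x ≠ 0 := by positivity
  have hs : 1 / 2 < 3 / 4 - δ := by linarith
  obtain ⟨L, hL⟩ := exists_tendsto_sum_oscTerm (φ := π / 4) hc hs
  refine ⟨L, hL.congr fun M ↦ sum_congr rfl fun n _ ↦ ?_⟩
  rw [oscTerm, sqrt_mul (Nat.cast_nonneg n), rpow_neg (Nat.cast_nonneg n), div_eq_mul_inv]
  ring_nf

theorem series_converges_delta (δ x : ℝ) (hδ : 0 < δ) (hδ' : δ < 1 / 4) (hx : 0 < x) :
    ∃ L : ℝ, Filter.Tendsto
      (fun M : ℕ => ∑ n ∈ Finset.Icc 1 M,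
        cos (2 * π * Real.sqrt (n * x) + π / 4) / (n : ℝ) ^ ((3 : ℝ) / 4 - δ))
      Filter.atTop (nhds L) :=
  series_converges_delta_general δ x hδ' hx
end
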